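/- arXiv:1203.1960 — 5 statements merged into one kernel-verified Lean document; each statement's English description precedes it below -/
import Mathlib

section
/- For all natural numbers x, y with x ≥ 2 and y ≥ 2, one has f̃(x)·f̃(y) ≤ f̃(x·y). -/
/-!
Writing `f t = 3 ^ E (log₃ (2t+1))` with `E u = u (2u+1)`, the inequality becomes one between
exponents. For `x, y ≥ 3` one has `2xy + 1 ≥ (19/49)(2x+1)(2y+1)`, so
`c = log₃(2xy+1) ≥ a + b - s` with `a = log₃(2x+1) ≥ 7/4`, `b = log₃(2y+1) ≥ 7/4` and `s = log₃(49/19) ≤ 7/8`,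
while `E (a + b - s) - E a - E b = 4(a-s)(b-s) - 2s² - s > 0`. When one factor is `2`, the value
`60 ≤ 3^(15/4)` is absorbed by `log₃(4y+1) ≥ log₃(2y+1) + 1/2`, since `E (b + 1/2) = E b + 2b + 1`.
The remaining case is `60 · 60 ≤ f 4 = 3^10`.
-/

open Real

/-- The function `f(x) = (2x+1)^(2·log₃(2x+1)+1)`. -/
noncomputable def f (x : ℝ) : ℝ :=
  (2 * x + 1) ^ (2 * Real.logb 3 (2 * x + 1) + 1)

/-- The modified function `f̃` on naturals: `f̃(2) = 60` and `f̃(n) = f(n)` otherwise. -/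
noncomputable def ftilde (n : ℕ) : ℝ :=
  if n = 2 then 60 else f n

lemma div_le_logb_of_pow_le_pow {b x : ℝ} {p q : ℕ} (hb : 1 < b) (hq : 0 < q)
    (h : b ^ p ≤ x ^ q) : (p : ℝ) / q ≤ logb b x := by
  have hlog := log_le_log (by positivity) h
  rw [log_pow, log_pow] at hlog
  rw [div_le_iff₀ (by positivity), logb, div_mul_eq_mul_div, le_div_iff₀ (log_pos hb)]
  linarith

lemma logb_le_div_of_pow_le_pow {b x : ℝ} {p q : ℕ} (hb : 1 < b) (hx : 0 < x) (hq : 0 < q)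
    (h : x ^ q ≤ b ^ p) : logb b x ≤ (p : ℝ) / q := by
  have hlog := log_le_log (by positivity) h
  rw [log_pow, log_pow] at hlog
  rw [le_div_iff₀ (by positivity), logb, div_mul_eq_mul_div, div_le_iff₀ (log_pos hb)]
  linarith

lemma seven_fourths_le_logb_three {t : ℝ} (ht : 7 ≤ t) : 7 / 4 ≤ logb 3 t := by
  have h := div_le_logb_of_pow_le_pow (b := 3) (p := 7) (q := 4) (by norm_num) (by norm_num)
    (le_trans (by norm_num) (pow_le_pow_left₀ (by norm_num) ht 4))
  norm_num at h
  exact h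

def fExponent (u : ℝ) : ℝ := u * (2 * u + 1)

lemma fExponent_le_fExponent {u v : ℝ} (hu : 0 ≤ u) (huv : u ≤ v) :
    fExponent u ≤ fExponent v := by
  unfold fExponent
  nlinarith

lemma f_eq_three_rpow_fExponent {t : ℝ} (ht : 0 < 2 * t + 1) :
    f t = 3 ^ fExponent (logb 3 (2 * t + 1)) := by
  rw [f, fExponent, rpow_mul (by norm_num), rpow_logb (by norm_num) (by norm_num) ht]

lemma fExponent_add_fExponent_le {a b c s : ℝ} (ha : 7 / 4 ≤ a) (hb : 7 / 4 ≤ b) (hs : s ≤ 7 / 8)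
    (hc : a + b - s ≤ c) : fExponent a + fExponent b ≤ fExponent c := by
  have gap : fExponent (a + b - s) - fExponent a - fExponent b
      = 4 * (a - s) * (b - s) - 2 * s ^ 2 - s := by
    unfold fExponent; ring
  have := fExponent_le_fExponent (by linarith) hc
  nlinarith [mul_le_mul (by linarith : 7 / 8 ≤ a - s) (by linarith : 7 / 8 ≤ b - s)
    (by norm_num) (by linarith)]

lemma f_mul_f_le_f_mul {x y : ℝ} (hx : 3 ≤ x) (hy : 3 ≤ y) : f x * f y ≤ f (x * y) := by
  set s := logb 3 (49 / 19)
  have hs : s ≤ 7 / 8 := by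
    have h := logb_le_div_of_pow_le_pow (b := 3) (p := 7) (q := 8) (x := 49 / 19) (by norm_num)
      (by norm_num) (by norm_num) (by norm_num)
    norm_num at h
    exact h
  have hxy : (2 * x + 1) * (2 * y + 1) / (49 / 19) ≤ 2 * (x * y) + 1 := by
    rw [div_le_iff₀ (by norm_num)]
    nlinarith [mul_nonneg (by linarith : (0 : ℝ) ≤ x - 3) (by linarith : (0 : ℝ) ≤ y - 3)]
  have hc := logb_le_logb_of_le (b := 3) (by norm_num) (by positivity) hxy
  rw [logb_div (by positivity) (by norm_num), logb_mul (by positivity) (by positivity)] at hc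
  rw [f_eq_three_rpow_fExponent (by linarith), f_eq_three_rpow_fExponent (by linarith),
    f_eq_three_rpow_fExponent (by positivity), ← rpow_add (by norm_num),
    rpow_le_rpow_left_iff (by norm_num)]
  exact fExponent_add_fExponent_le (seven_fourths_le_logb_three (by linarith))
    (seven_fourths_le_logb_three (by linarith)) hs hc

lemma sixty_mul_f_le_f_two_mul {y : ℝ} (hy : 3 ≤ y) : 60 * f y ≤ f (2 * y) := by
  set b := logb 3 (2 * y + 1)
  set c := logb 3 (2 * (2 * y) + 1)
  have h60 : logb 3 60 ≤ 15 / 4 := by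
    have h := logb_le_div_of_pow_le_pow (b := 3) (p := 15) (q := 4) (x := 60) (by norm_num)
      (by norm_num) (by norm_num) (by norm_num)
    norm_num at h
    exact h
  have hhalf : 1 / 2 ≤ logb 3 (13 / 7) := by
    have h := div_le_logb_of_pow_le_pow (b := 3) (p := 1) (q := 2) (x := 13 / 7) (by norm_num)
      (by norm_num) (by norm_num)
    norm_num at h
    exact h
  have hb : 7 / 4 ≤ b := seven_fourths_le_logb_three (by linarith)
  have hc : b + 1 / 2 ≤ c := by
    have hmul : 13 / 7 * (2 * y + 1) ≤ 2 * (2 * y) + 1 := by linarith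
    have h := logb_le_logb_of_le (b := 3) (by norm_num) (by positivity) hmul
    rw [logb_mul (by norm_num) (by positivity)] at h
    linarith
  have hshift : fExponent (b + 1 / 2) = fExponent b + 2 * b + 1 := by
    unfold fExponent; ring
  have := fExponent_le_fExponent (by linarith) hc
  rw [f_eq_three_rpow_fExponent (by linarith), f_eq_three_rpow_fExponent (by linarith),
    ← rpow_logb (b := 3) (x := 60) (by norm_num) (by norm_num) (by norm_num),
    ← rpow_add (by norm_num), rpow_le_rpow_left_iff (by norm_num)]
  linarith

lemma f_four : f 4 = 3 ^ 10 := by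
  have h9 : logb 3 (2 * 4 + 1) = 2 := by
    rw [show (2 * 4 + 1 : ℝ) = 3 ^ 2 by norm_num, logb_pow, logb_self_eq_one (by norm_num)]
    norm_num
  rw [f_eq_three_rpow_fExponent (by norm_num), h9, fExponent]
  norm_num

lemma ftilde_two : ftilde 2 = 60 := if_pos rfl

lemma ftilde_of_ne_two {n : ℕ} (hn : n ≠ 2) : ftilde n = f n := if_neg hn

/-- **Submultiplicativity of `f̃` (Lemma A1(a)):** `f̃(x)·f̃(y) ≤ f̃(x·y)` for naturals
`x, y ≥ 2`. -/
theorem stmt13 : ∀ x y : ℕ, 2 ≤ x → 2 ≤ y → ftilde x * ftilde y ≤ ftilde (x * y) := by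
  intro x y hx hy
  rw [ftilde_of_ne_two (by nlinarith : x * y ≠ 2)]
  rcases hx.eq_or_lt with rfl | hx <;> rcases hy.eq_or_lt with rfl | hy
  · norm_num [ftilde_two, f_four]
  · rw [ftilde_two, ftilde_of_ne_two hy.ne']
    push_cast
    exact sixty_mul_f_le_f_two_mul (by exact_mod_cast hy)
  · rw [ftilde_of_ne_two hx.ne', ftilde_two, mul_comm, Nat.mul_comm x 2]
    push_cast
    exact sixty_mul_f_le_f_two_mul (by exact_mod_cast hx)
  · rw [ftilde_of_ne_two hx.ne', ftilde_of_ne_two hy.ne', Nat.cast_mul]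
    exact f_mul_f_le_f_mul (by exact_mod_cast hx) (by exact_mod_cast hy)
end

section
/- For all natural numbers x, t with x ≥ 2 and t ≥ 1, one has t!·(f̃(x))^t ≤ f̃(x^t). -/
/-!
Take logarithms to base 3. With `u = log₃(2y+1)` one has `log₃ f(y) = (2u+1)u`, and
`t! ≤ 2^(t(t-1)/2)`, so the claim becomes a polynomial inequality in `c = log₃ 2`,
`u = log₃(2x+1)` and `v = log₃(2xᵗ+1)`. For `x ≥ 3` we have `u ≤ log₃ x + log₃(7/3)` and
`v ≥ c + t·log₃ x`; the quadratic growth of `(2v+1)v` in `t` then dominates, except at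
`(x, t) = (3, 2)`, where the margin is small and `v = log₃ 19` is used exactly. For `x = 2`,
`f̃(2) = 60` contributes only `t·log₃ 60` against `v ≥ (t+1)c`.
-/

open Real
open scoped Nat

theorem Nat.factorial_le_two_pow_choose_two (n : ℕ) : n ! ≤ 2 ^ n.choose 2 := by
  induction n with
  | zero => simp
  | succ n ih =>
    rw [factorial_succ, show 2 = 1 + 1 from rfl, choose_succ_succ', choose_one_right, pow_add]
    exact Nat.mul_le_mul Nat.lt_two_pow_self ih

namespace Real

theorem div_le_logb_of_pow_le {b x : ℝ} {m n : ℕ} (hb : 1 < b) (hn : 0 < n)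
    (h : b ^ m ≤ x ^ n) : (m / n : ℝ) ≤ logb b x := by
  have := logb_le_logb_of_le hb (by positivity) h
  rw [logb_pow, logb_pow, logb_self_eq_one hb] at this
  rw [div_le_iff₀ (by positivity)]
  linarith

theorem logb_le_div_of_pow_le {b x : ℝ} {m n : ℕ} (hb : 1 < b) (hx : 0 < x) (hn : 0 < n)
    (h : x ^ n ≤ b ^ m) : logb b x ≤ m / n := by
  have := logb_le_logb_of_le hb (by positivity) h
  rw [logb_pow, logb_pow, logb_self_eq_one hb] at this
  rw [le_div_iff₀ (by positivity)]
  linarith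

theorem factorial_mul_pow_le_of_logb_le {b A B : ℝ} {t : ℕ} (hb : 1 < b) (hA : 0 < A)
    (hB : 0 < B) (h : t * (t - 1) / 2 * logb b 2 + t * logb b A ≤ logb b B) :
    t ! * A ^ t ≤ B := by
  have hfact : logb b t ! ≤ t * (t - 1) / 2 * logb b 2 := by
    have hle : (t ! : ℝ) ≤ 2 ^ t.choose 2 := by exact_mod_cast t.factorial_le_two_pow_choose_two
    have := logb_le_logb_of_le hb (by positivity) hle
    rwa [logb_pow, Nat.cast_choose_two] at this
  rw [← logb_le_logb hb (by positivity) hB, logb_mul (by positivity) (by positivity), logb_pow]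
  linarith

theorem le_logb_two_mul_pow_add_one {b x : ℝ} (hb : 1 < b) (hx : 0 < x) (t : ℕ) :
    logb b 2 + t * logb b x ≤ logb b (2 * x ^ t + 1) := by
  rw [← logb_pow, ← logb_mul (by norm_num) (by positivity)]
  exact logb_le_logb_of_le hb (by positivity) (by linarith)

end Real

def fExp (u : ℝ) : ℝ := (2 * u + 1) * u

theorem fExp_le_fExp {u v : ℝ} (hu : 0 ≤ u) (huv : u ≤ v) : fExp u ≤ fExp v := by
  unfold fExp
  nlinarith

theorem f_pos {y : ℝ} (hy : 0 ≤ y) : 0 < f y :=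
  rpow_pos_of_pos (by linarith) _

theorem logb_three_f {y : ℝ} (hy : 0 ≤ y) : logb 3 (f y) = fExp (logb 3 (2 * y + 1)) := by
  rw [f, logb_rpow_eq_mul_logb_of_pos (by linarith), fExp]

theorem logb_three_two_bounds : 17 / 27 ≤ logb 3 2 ∧ logb 3 2 ≤ 12 / 19 := by
  constructor
  · exact_mod_cast div_le_logb_of_pow_le (m := 17) (n := 27) (by norm_num) (by norm_num)
      (by norm_num)
  · exact_mod_cast logb_le_div_of_pow_le (m := 12) (n := 19) (by norm_num) (by norm_num)
      (by norm_num) (by norm_num)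

theorem logb_three_seven_div_three_le : logb 3 (7 / 3) ≤ 7 / 9 := by
  exact_mod_cast logb_le_div_of_pow_le (m := 7) (n := 9) (by norm_num) (by norm_num)
    (by norm_num) (by norm_num)

theorem eight_div_three_le_logb_three_nineteen : 8 / 3 ≤ logb 3 19 := by
  exact_mod_cast div_le_logb_of_pow_le (m := 8) (n := 3) (by norm_num) (by norm_num)
    (by norm_num)

theorem logb_three_sixty_le : logb 3 60 ≤ 41 / 11 := by
  exact_mod_cast logb_le_div_of_pow_le (m := 41) (n := 11) (by norm_num) (by norm_num)
    (by norm_num) (by norm_num)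

theorem logb_three_two_mul_add_one_le {x : ℝ} (hx : 3 ≤ x) :
    logb 3 (2 * x + 1) ≤ logb 3 x + 7 / 9 :=
  calc logb 3 (2 * x + 1) ≤ logb 3 (7 / 3 * x) :=
        logb_le_logb_of_le (by norm_num) (by linarith) (by linarith)
    _ = logb 3 (7 / 3) + logb 3 x := logb_mul (by norm_num) (by positivity)
    _ ≤ logb 3 x + 7 / 9 := by linarith [logb_three_seven_div_three_le]

theorem choose_mul_add_mul_fExp_le_fExp {c u a v t : ℝ} (hc : 17 / 27 ≤ c) (hc' : c ≤ 12 / 19)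
    (hu0 : 0 ≤ u) (hu : u ≤ a + 7 / 9) (ha : 1 ≤ a) (hv : c + t * a ≤ v) (ht : 2 ≤ t)
    (h : 2 * c ≤ a ∨ 3 ≤ t) :
    t * (t - 1) / 2 * c + t * fExp u ≤ fExp v := by
  have hu' : fExp u ≤ fExp (a + 7 / 9) := fExp_le_fExp hu0 hu
  have hv' : fExp (c + t * a) ≤ fExp v := fExp_le_fExp (by positivity) hv
  -- `t` times this is `fExp (c + t a) - t fExp (a + 7/9) - t(t-1)c/2` minus `2c² + c ≥ 0`.
  have key : 0 ≤ 2 * (t - 1) * a ^ 2 + 4 * a * (c - 7 / 9) - 161 / 81 - (t - 1) * c / 2 := by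
    rcases h with h | h
    · nlinarith [mul_nonneg (by linarith : (0:ℝ) ≤ t - 2) (by nlinarith : (0:ℝ) ≤ 2 * a ^ 2 - c)]
    · nlinarith [mul_nonneg (by linarith : (0:ℝ) ≤ t - 3) (by nlinarith : (0:ℝ) ≤ 2 * a ^ 2 - c)]
  unfold fExp at *
  nlinarith [mul_nonneg (by linarith : (0:ℝ) ≤ t) key,
    mul_le_mul_of_nonneg_left hu' (by linarith : (0:ℝ) ≤ t)]

theorem add_two_mul_fExp_le_fExp {c u v : ℝ} (hc : c ≤ 12 / 19) (hu0 : 0 ≤ u) (hu : u ≤ 16 / 9)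
    (hv : 8 / 3 ≤ v) : c + 2 * fExp u ≤ fExp v := by
  unfold fExp
  nlinarith

theorem choose_mul_add_mul_le_fExp {c L v t : ℝ} (hc : 17 / 27 ≤ c) (hc' : c ≤ 12 / 19)
    (hL : L ≤ 41 / 11) (ht : 2 ≤ t) (hv : (t + 1) * c ≤ v) :
    t * (t - 1) / 2 * c + t * L ≤ fExp v := by
  have hv' : fExp ((t + 1) * c) ≤ fExp v := fExp_le_fExp (by positivity) hv
  have hc2 : (t + 1) ^ 2 * (17 / 27) ^ 2 ≤ (t + 1) ^ 2 * c ^ 2 := by gcongr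
  unfold fExp at *
  nlinarith [sq_nonneg (t - 2)]

theorem factorial_mul_f_pow_le_f_pow {x t : ℕ} (hx : 3 ≤ x) (ht : 2 ≤ t) (h : 4 ≤ x ∨ 3 ≤ t) :
    t ! * f x ^ t ≤ f (x ^ t) := by
  have hx' : (3 : ℝ) ≤ x := by exact_mod_cast hx
  obtain ⟨hc, hc'⟩ := logb_three_two_bounds
  have ha : 1 ≤ logb 3 x := by
    rw [← logb_self_eq_one (b := 3) (by norm_num)]
    exact logb_le_logb_of_le (by norm_num) (by norm_num) hx'
  have h' : 2 * logb 3 2 ≤ logb 3 x ∨ 3 ≤ (t : ℝ) := by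
    refine h.imp (fun h4 ↦ ?_) (fun h3 ↦ by exact_mod_cast h3)
    rw [← Nat.cast_ofNat, ← logb_pow]
    exact logb_le_logb_of_le (by norm_num) (by norm_num) (by norm_num; exact_mod_cast h4)
  apply factorial_mul_pow_le_of_logb_le (b := 3) (by norm_num) (f_pos (by positivity))
    (f_pos (by positivity))
  rw [logb_three_f (by positivity), logb_three_f (by positivity)]
  exact choose_mul_add_mul_fExp_le_fExp hc hc' (logb_nonneg (by norm_num) (by linarith))
    (logb_three_two_mul_add_one_le hx') ha
    (le_logb_two_mul_pow_add_one (by norm_num) (by positivity) t) (by exact_mod_cast ht) h'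

theorem two_mul_f_three_sq_le : 2 * f 3 ^ 2 ≤ f 9 := by
  have hu : logb 3 7 ≤ 16 / 9 := by
    have := logb_three_two_mul_add_one_le (le_refl 3)
    norm_num [logb_self_eq_one] at this
    linarith
  have key := add_two_mul_fExp_le_fExp logb_three_two_bounds.2
    (logb_nonneg (by norm_num) (by norm_num)) hu eight_div_three_le_logb_three_nineteen
  have := factorial_mul_pow_le_of_logb_le (b := 3) (t := 2) (by norm_num)
    (f_pos (by norm_num : (0 : ℝ) ≤ 3)) (f_pos (by norm_num : (0 : ℝ) ≤ 9))
    (by rw [logb_three_f (by norm_num), logb_three_f (by norm_num)]; norm_num; linarith)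
  simpa using this

theorem factorial_mul_sixty_pow_le_f {t : ℕ} (ht : 2 ≤ t) : t ! * 60 ^ t ≤ f (2 ^ t) := by
  obtain ⟨hc, hc'⟩ := logb_three_two_bounds
  have hv := le_logb_two_mul_pow_add_one (b := 3) (by norm_num) (by norm_num : (0 : ℝ) < 2) t
  apply factorial_mul_pow_le_of_logb_le (b := 3) (by norm_num) (by norm_num)
    (f_pos (by positivity))
  rw [logb_three_f (by positivity)]
  exact choose_mul_add_mul_le_fExp hc hc' logb_three_sixty_le (by exact_mod_cast ht)
    (by linarith)

/-- **Lemma A1(b):** `t!·(f̃(x))^t ≤ f̃(x^t)` for naturals `x ≥ 2`, `t ≥ 1`. -/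
theorem stmt14 : ∀ x t : ℕ, 2 ≤ x → 1 ≤ t →
    (Nat.factorial t : ℝ) * (ftilde x) ^ t ≤ ftilde (x ^ t) := by
  intro x t hx ht
  obtain rfl | ht := ht.eq_or_lt
  · simp
  have hxt : x ^ t ≠ 2 := by
    have : x ^ 1 < x ^ t := Nat.pow_lt_pow_right (by omega) ht
    rw [pow_one] at this
    omega
  rw [ftilde, ftilde, if_neg hxt, Nat.cast_pow]
  obtain rfl | hx := hx.eq_or_lt
  · simpa using factorial_mul_sixty_pow_le_f ht
  rw [if_neg hx.ne']
  by_cases h : x = 3 ∧ t = 2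
  · obtain ⟨rfl, rfl⟩ := h
    norm_num [two_mul_f_three_sq_le]
  · exact factorial_mul_f_pow_le_f_pow hx ht (by omega)
end

section
/- (a) For all natural numbers x, y with x ≥ 2 and y ≥ 2, one has (x+2)!·(y+2)! ≤ (x·y+2)!. (b) For all natural numbers x, t with x ≥ 3 and t ≥ 1, one has t!·((x+2)!)^t ≤ (x^t+2)!. -/
/-!
Both inequalities come from `a! * b! ∣ (a + b)!`, so that `a! * b! ≤ c!` as soon as `a + b ≤ c`.
For (a) this settles every case with `(x - 1) * (y - 1) ≥ 3`, leaving only `(2, 2)`, `(2, 3)`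
and `(3, 2)` to check by hand. For (b), induct on `t`: the new factor `t + 1` of `(t + 1)!` is
absorbed by one extra factor of the factorial, since
`(x + 2) + (x ^ t + 2) + 1 ≤ x ^ (t + 1) + 2` once `x ≥ 3`.
-/

open Nat

namespace Nat

theorem factorial_mul_factorial_le_of_add_le {a b c : ℕ} (h : a + b ≤ c) : a ! * b ! ≤ c ! :=
  (Nat.le_of_dvd (factorial_pos _) (factorial_mul_factorial_dvd_factorial_add a b)).trans
    (factorial_le h)

theorem mul_factorial_le_factorial_succ {n m : ℕ} (h : n ≤ m + 1) : n * m ! ≤ (m + 1)! := by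
  rw [factorial_succ]
  exact Nat.mul_le_mul_right _ h

theorem factorial_add_two_mul_factorial_add_two_le {x y : ℕ} (hx : 2 ≤ x) (hy : 2 ≤ y) :
    (x + 2)! * (y + 2)! ≤ (x * y + 2)! := by
  by_cases h : x + y + 2 ≤ x * y
  · exact factorial_mul_factorial_le_of_add_le (by omega)
  · have hx3 : x ≤ 3 := by nlinarith
    have hy3 : y ≤ 3 := by nlinarith
    interval_cases x <;> interval_cases y <;> first | omega | decide

theorem factorial_mul_factorial_add_two_pow_le {x t : ℕ} (hx : 3 ≤ x) (ht : 1 ≤ t) :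
    t ! * (x + 2)! ^ t ≤ (x ^ t + 2)! := by
  induction t, ht using Nat.le_induction with
  | base => simp
  | succ t _ ih =>
    have ht_lt : t < x ^ t := Nat.lt_pow_self (by omega)
    have hpow : 3 ≤ x ^ t := hx.trans (Nat.le_self_pow (by omega) x)
    have hgap : x + 2 + (x ^ t + 2) + 1 ≤ x ^ (t + 1) + 2 := by
      rw [pow_succ]
      nlinarith
    calc (t + 1)! * (x + 2)! ^ (t + 1)
        = (t + 1) * ((x + 2)! * (t ! * (x + 2)! ^ t)) := by
          rw [factorial_succ, pow_succ]
          ring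
      _ ≤ (t + 1) * ((x + 2)! * (x ^ t + 2)!) := by gcongr
      _ ≤ (t + 1) * (x + 2 + (x ^ t + 2))! := by
          gcongr
          exact factorial_mul_factorial_le_of_add_le le_rfl
      _ ≤ (x + 2 + (x ^ t + 2) + 1)! := mul_factorial_le_factorial_succ (by omega)
      _ ≤ (x ^ (t + 1) + 2)! := factorial_le hgap

end Nat

/-- **Lemma A2:** (a) `(x+2)!·(y+2)! ≤ (x·y+2)!` for naturals `x, y ≥ 2`;
(b) `t!·((x+2)!)^t ≤ (x^t+2)!` for naturals `x ≥ 3`, `t ≥ 1`. -/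
theorem stmt15 :
    (∀ x y : ℕ, 2 ≤ x → 2 ≤ y →
      Nat.factorial (x + 2) * Nat.factorial (y + 2) ≤ Nat.factorial (x * y + 2)) ∧
    (∀ x t : ℕ, 3 ≤ x → 1 ≤ t →
      Nat.factorial t * (Nat.factorial (x + 2)) ^ t ≤ Nat.factorial (x ^ t + 2)) :=
  ⟨fun _ _ => Nat.factorial_add_two_mul_factorial_add_two_le,
    fun _ _ => Nat.factorial_mul_factorial_add_two_pow_le⟩
end

section
/- (a) For all real n ≥ 2, f(n) ≥ 4.796·n^(2·log₃ n + 3.5). (b) For all real n ≥ 4, n·f(n) ≤ n^(2·log₂ n + 5). (c) For all real n ≥ 37, n·f(n) ≤ 2·n^(2·log₂ n + 1). (d) For all real n, m ≥ 2, (2·n^(2·log₂ n + 1))·(2·m^(2·log₂ m + 1)) ≤ 2·(n·m)^(2·log₂(n·m) + 1). -/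
/-!
Since `x ↦ x ^ (2 logb 3 x + 1)` is increasing on `[1, ∞)`, the argument `2n + 1` of `f` may be
replaced by `2n` (for the lower bound (a)), by `(3/2)²·n` for `n ≥ 4`, or by `2·(75/74)·n` for
`n ≥ 37`. Then `log (2n + 1)` becomes `log n` plus a constant, and after taking logarithms every
inequality is a quadratic inequality in `log n` whose coefficients involve `log 2` and `log 3`:
(a) and (b) come down to `3⁵ < 2⁸`, (c) to a numerical check at `log 37 > 3.61`, and (d), for any
base `b` and `n, m ≥ b`, to `(log b)² ≤ 4 log n log m`.
-/

open Real

theorem monotoneOn_rpow_mul_logb_add {b c d : ℝ} (hb : 1 < b) (hc : 0 ≤ c) (hd : 0 ≤ d) :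
    MonotoneOn (fun x : ℝ => x ^ (c * logb b x + d)) (Set.Ici 1) := by
  intro x (hx : 1 ≤ x) y (hy : 1 ≤ y) hxy
  have hexp : c * logb b x + d ≤ c * logb b y + d := by gcongr
  calc x ^ (c * logb b x + d) ≤ y ^ (c * logb b x + d) :=
        rpow_le_rpow (by linarith) hxy (by positivity [logb_nonneg hb hx])
    _ ≤ y ^ (c * logb b y + d) := rpow_le_rpow_of_exponent_le hy hexp

theorem log_rpow_mul_logb_add {b x : ℝ} (hx : 0 < x) (c d : ℝ) :
    log (x ^ (c * logb b x + d)) = (c * log x / log b + d) * log x := by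
  rw [log_rpow hx, logb, mul_div_assoc]

theorem five_mul_log_three_lt_eight_mul_log_two : 5 * log 3 < 8 * log 2 := by
  have h : log ((3 : ℝ) ^ 5) < log ((2 : ℝ) ^ 8) := log_lt_log (by norm_num) (by norm_num)
  simpa only [log_pow, Nat.cast_ofNat] using h

theorem lt_log_thirty_seven : 3.61 < log 37 := by
  have h := log_le_sub_one_of_pos (show (0 : ℝ) < 36 / 37 by norm_num)
  have h36 : log 36 = 2 * log 2 + 2 * log 3 := by
    rw [show (36 : ℝ) = 2 ^ 2 * 3 ^ 2 by norm_num, log_mul (by norm_num) (by norm_num),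
      log_pow, log_pow]
    push_cast; ring
  rw [log_div (by norm_num) (by norm_num), h36] at h
  linarith [log_two_gt_d9, log_three_gt_d9]

theorem le_f_of_two_le {n : ℝ} (hn : 2 ≤ n) : 4.796 * n ^ (2 * logb 3 n + 3.5) ≤ f n := by
  have hn0 : 0 < n := by linarith
  have hmono : (2 * n) ^ (2 * logb 3 (2 * n) + 1) ≤ f n :=
    monotoneOn_rpow_mul_logb_add (by norm_num) (by norm_num) (by norm_num)
      (Set.mem_Ici.2 (by linarith)) (Set.mem_Ici.2 (by linarith)) (by linarith)
  refine le_trans ?_ hmono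
  rw [← log_le_log_iff (by positivity) (by positivity), log_mul (by norm_num) (by positivity),
    log_rpow_mul_logb_add hn0, log_rpow_mul_logb_add (by positivity), log_mul two_ne_zero hn0.ne']
  have hv : log 2 ≤ log n := log_le_log two_pos hn
  have hL : log 4.796 ≤ 2 * log 2 + 0.19 := by
    have h := log_le_sub_one_of_pos (show (0 : ℝ) < 1.095 by norm_num)
    have h' : log 4.796 ≤ log ((2 * 1.095) ^ 2) := log_le_log (by norm_num) (by norm_num)
    rw [log_pow, log_mul two_ne_zero (by norm_num)] at h'
    norm_num at h h' ⊢
    linarith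
  have h85 := five_mul_log_three_lt_eight_mul_log_two
  have ha1 := log_two_gt_d9
  have hb1 := log_three_gt_d9
  have hb2 := log_three_lt_d9
  field_simp
  -- with `a, b, v = log 2, log 3, log n`:
  -- `b·(rhs - lhs) = (8a - 5b)(v - a)/2 + 6a² - 3ab/2 - b·log 4.796`
  nlinarith [mul_nonneg (sub_nonneg.2 hv) (sub_nonneg.2 h85.le)]

theorem mul_f_le_of_four_le {n : ℝ} (hn : 4 ≤ n) : n * f n ≤ n ^ (2 * logb 2 n + 5) := by
  have hn0 : 0 < n := by linarith
  have hmono : f n ≤ ((3 / 2) ^ 2 * n) ^ (2 * logb 3 ((3 / 2) ^ 2 * n) + 1) :=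
    monotoneOn_rpow_mul_logb_add (by norm_num) (by norm_num) (by norm_num)
      (Set.mem_Ici.2 (by linarith)) (Set.mem_Ici.2 (by linarith)) (by linarith)
  refine le_trans (mul_le_mul_of_nonneg_left hmono hn0.le) ?_
  rw [← log_le_log_iff (by positivity) (by positivity), log_mul hn0.ne' (by positivity),
    log_rpow_mul_logb_add hn0, log_rpow_mul_logb_add (by positivity),
    log_mul (by norm_num) hn0.ne', log_pow, log_div three_ne_zero two_ne_zero]
  have hv : 2 * log 2 ≤ log n := by
    rw [← log_rpow two_pos]; exact log_le_log (by positivity) (by norm_num; linarith)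
  have h85 : 0 ≤ 8 * log 2 - 5 * log 3 := by linarith [five_mul_log_three_lt_eight_mul_log_two]
  have ha := log_pos one_lt_two
  have hab : log 2 < log 3 := log_lt_log two_pos (by norm_num)
  push_cast
  field_simp
  -- with `a, b, v = log 2, log 3, log n`:
  -- `ab·(rhs - lhs) = 2(b - a)(v² - 4a²) + a(8a - 5b)v + 2a(b - a)(8a - 5b)`
  nlinarith [mul_nonneg (mul_nonneg (sub_nonneg.2 hv) (sub_nonneg.2 hab.le))
      (by linarith : 0 ≤ log n + 2 * log 2),
    mul_nonneg (mul_nonneg ha.le h85) (by linarith : 0 ≤ log n),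
    mul_nonneg (mul_nonneg ha.le h85) (sub_nonneg.2 hab.le)]

theorem mul_f_le_two_mul_of_thirty_seven_le {n : ℝ} (hn : 37 ≤ n) :
    n * f n ≤ 2 * n ^ (2 * logb 2 n + 1) := by
  have hn0 : 0 < n := by linarith
  have hmono : f n ≤ (2 * (75 / 74) * n) ^ (2 * logb 3 (2 * (75 / 74) * n) + 1) :=
    monotoneOn_rpow_mul_logb_add (by norm_num) (by norm_num) (by norm_num)
      (Set.mem_Ici.2 (by linarith)) (Set.mem_Ici.2 (by linarith)) (by linarith)
  refine le_trans (mul_le_mul_of_nonneg_left hmono hn0.le) ?_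
  rw [← log_le_log_iff (by positivity) (by positivity), log_mul hn0.ne' (by positivity),
    log_mul two_ne_zero (by positivity), log_rpow_mul_logb_add hn0,
    log_rpow_mul_logb_add (by positivity), log_mul (by norm_num) hn0.ne',
    log_mul two_ne_zero (by norm_num)]
  have hv : 3.61 ≤ log n := lt_log_thirty_seven.le.trans (log_le_log (by norm_num) hn)
  have he0 : 0 ≤ log (75 / 74) := log_nonneg (by norm_num)
  have he : log (75 / 74) ≤ 1 / 74 := by
    linarith [log_le_sub_one_of_pos (show (0 : ℝ) < 75 / 74 by norm_num)]
  have ha1 := log_two_gt_d9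
  have ha2 := log_two_lt_d9
  have hb1 := log_three_gt_d9
  set a := log 2
  set b := log 3
  set v := log n
  have hshift : 2 * a * (a + log (75 / 74) + v) ^ 2 + a * b * (a + log (75 / 74) + v) ≤
      2 * a * (a + 1 / 74 + v) ^ 2 + a * b * (a + 1 / 74 + v) := by
    gcongr
  have hnum : 2 * a * (a + 1 / 74 + v) ^ 2 + a * b * (a + 1 / 74 + v) ≤
      a ^ 2 * b + 2 * b * v ^ 2 := by
    have hv' := sub_nonneg.2 hv
    have ha' := sub_nonneg.2 ha2.le
    have hb' := sub_nonneg.2 hb1.le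
    nlinarith [mul_nonneg hv' hv', mul_nonneg (mul_nonneg hv' hv') hb',
      mul_nonneg (mul_nonneg hv' hv') ha', mul_nonneg (sub_nonneg.2 ha1.le) hb',
      mul_nonneg (mul_nonneg hv' ha') hb']
  field_simp
  linarith

theorem mul_rpow_two_mul_logb_add_one_mul_le {b n m : ℝ} (hb : 1 < b) (hn : b ≤ n)
    (hm : b ≤ m) :
    (b * n ^ (2 * logb b n + 1)) * (b * m ^ (2 * logb b m + 1)) ≤
      b * (n * m) ^ (2 * logb b (n * m) + 1) := by
  have hn0 : 0 < n := by linarith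
  have hm0 : 0 < m := by linarith
  have hβ : 0 < log b := log_pos hb
  rw [← log_le_log_iff (by positivity) (by positivity), log_mul (by positivity) (by positivity),
    log_mul (by positivity) (by positivity), log_mul (by positivity) (by positivity),
    log_mul (by positivity) (by positivity), log_rpow_mul_logb_add hn0,
    log_rpow_mul_logb_add hm0, log_rpow_mul_logb_add (by positivity), log_mul hn0.ne' hm0.ne']
  have hv : log b ≤ log n := log_le_log (by linarith) hn
  have hw : log b ≤ log m := log_le_log (by linarith) hm
  field_simp
  nlinarith [mul_le_mul hv hw hβ.le (by linarith)]

/-- **Lemma A7:** (a) `f(n) ≥ 4.796·n^(2·log₃ n + 3.5)` for `n ≥ 2`;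
(b) `n·f(n) ≤ n^(2·log₂ n + 5)` for `n ≥ 4`;
(c) `n·f(n) ≤ 2·n^(2·log₂ n + 1)` for `n ≥ 37`;
(d) `(2·n^(2·log₂ n+1))·(2·m^(2·log₂ m+1)) ≤ 2·(nm)^(2·log₂(nm)+1)` for `n, m ≥ 2`. -/
theorem stmt18 :
    (∀ n : ℝ, 2 ≤ n → 4.796 * n ^ (2 * Real.logb 3 n + 3.5) ≤ f n) ∧
    (∀ n : ℝ, 4 ≤ n → n * f n ≤ n ^ (2 * Real.logb 2 n + 5)) ∧
    (∀ n : ℝ, 37 ≤ n → n * f n ≤ 2 * n ^ (2 * Real.logb 2 n + 1)) ∧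
    (∀ n m : ℝ, 2 ≤ n → 2 ≤ m →
      (2 * n ^ (2 * Real.logb 2 n + 1)) * (2 * m ^ (2 * Real.logb 2 m + 1)) ≤
        2 * (n * m) ^ (2 * Real.logb 2 (n * m) + 1)) :=
  ⟨fun _ => le_f_of_two_le, fun _ => mul_f_le_of_four_le,
    fun _ => mul_f_le_two_mul_of_thirty_seven_le,
    fun _ _ => mul_rpow_two_mul_logb_add_one_mul_le one_lt_two⟩
end

section
/- (a) For all natural numbers n, t with n ≥ 13 and t ≥ 1, one has t!·((n+2)!)^t ≤ (n·t+2)!. (b) For all natural numbers n, m with n ≥ 13 and m ≥ 13, one has (n+2)!·(m+2)! ≤ (n+m+2)!. -/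
/-!
Passing from `b!` and `c!` to `(b + 1)!` and `(c + 1)!` multiplies the two sides of
`a! * b! ≤ c!` by `b + 1 ≤ c + 1`, so from the numerical base case `15! * 16! ≤ 28!` one climbs to
`(n + 2)! * (m + 3)! ≤ (n + m + 2)!` for all `n, m ≥ 13`. This gives (b) at once, and (a) by
induction on `t`, peeling off one factor `(n + 2)!` at a time.
-/

open Nat

namespace Nat

theorem factorial_mul_factorial_add_le {a b c : ℕ} (h : a ! * b ! ≤ c !) (hbc : b ≤ c) (k : ℕ) :
    a ! * (b + k)! ≤ (c + k)! := by
  induction k with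
  | zero => exact h
  | succ k ih =>
    calc a ! * (b + k + 1)! = (b + k + 1) * (a ! * (b + k)!) := by
          rw [factorial_succ]; ring
      _ ≤ (c + k + 1) * (c + k)! := Nat.mul_le_mul (by omega) ih
      _ = (c + k + 1)! := (factorial_succ _).symm

theorem factorial_add_two_mul_factorial_add_three_le {n m : ℕ} (hn : 13 ≤ n) (hm : 13 ≤ m) :
    (n + 2)! * (m + 3)! ≤ (n + m + 2)! := by
  obtain ⟨i, rfl⟩ := exists_add_of_le hn
  obtain ⟨j, rfl⟩ := exists_add_of_le hm
  have base : 16 ! * 15 ! ≤ 28 ! := by decide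
  have hi : (13 + i + 2)! * 16 ! ≤ (28 + i)! := by
    rw [mul_comm, show 13 + i + 2 = 15 + i by omega]
    exact factorial_mul_factorial_add_le base (by norm_num) i
  rw [show 13 + j + 3 = 16 + j by omega, show 13 + i + (13 + j) + 2 = 28 + i + j by omega]
  exact factorial_mul_factorial_add_le hi (by omega) j

theorem factorial_mul_factorial_pow_le {n t : ℕ} (hn : 13 ≤ n) (ht : 1 ≤ t) :
    t ! * (n + 2)! ^ t ≤ (n * t + 2)! := by
  induction t, ht using le_induction with
  | base => simp
  | succ t ht ih =>
    have hnt : 13 ≤ n * t := le_mul_of_le_of_one_le hn ht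
    calc (t + 1)! * (n + 2)! ^ (t + 1)
        = (n + 2)! * ((t + 1) * (t ! * (n + 2)! ^ t)) := by
          rw [factorial_succ, pow_succ]; ring
      _ ≤ (n + 2)! * ((n * t + 2 + 1) * (n * t + 2)!) :=
          Nat.mul_le_mul_left _ (Nat.mul_le_mul (by nlinarith) ih)
      _ = (n + 2)! * (n * t + 3)! := by rw [← factorial_succ]
      _ ≤ (n + n * t + 2)! := factorial_add_two_mul_factorial_add_three_le hn hnt
      _ = (n * (t + 1) + 2)! := by ring_nf

theorem factorial_add_two_mul_factorial_add_two_le_s19 {n m : ℕ} (hn : 13 ≤ n) (hm : 13 ≤ m) :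
    (n + 2)! * (m + 2)! ≤ (n + m + 2)! :=
  (Nat.mul_le_mul_left _ (factorial_le (by omega))).trans
    (factorial_add_two_mul_factorial_add_three_le hn hm)

end Nat

/-- **Lemma A9:** (a) `t!·((n+2)!)^t ≤ (n·t+2)!` for naturals `n ≥ 13`, `t ≥ 1`;
(b) `(n+2)!·(m+2)! ≤ (n+m+2)!` for naturals `n, m ≥ 13`. -/
theorem stmt19 :
    (∀ n t : ℕ, 13 ≤ n → 1 ≤ t →
      Nat.factorial t * (Nat.factorial (n + 2)) ^ t ≤ Nat.factorial (n * t + 2)) ∧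
    (∀ n m : ℕ, 13 ≤ n → 13 ≤ m →
      Nat.factorial (n + 2) * Nat.factorial (m + 2) ≤ Nat.factorial (n + m + 2)) :=
  ⟨fun _ _ hn ht => factorial_mul_factorial_pow_le hn ht,
    fun _ _ hn hm => factorial_add_two_mul_factorial_add_two_le_s19 hn hm⟩
end
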